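/- For every k ∈ ℤ and (a,i),(b,j) ∈ X, σ_{(a,i)}^k((b,j)) = (b + k·δ, j + k·(rδ + 1)) where δ = i − a·r. -/

import Mathlib

/-- The map `σ_{(a,i)}((b,j)) = (b - ar + i, j + ir - ar² + 1)` of the solution `C(n₁,n₂,r)`. -/
def Csigma {n₁ n₂ : ℕ} (hd : n₁ ∣ n₂) (r : ℕ)
    (x y : ZMod n₁ × ZMod n₂) : ZMod n₁ × ZMod n₂ :=
  (y.1 - x.1 * (r : ZMod n₁) + ZMod.castHom hd (ZMod n₁) x.2,
   y.2 + x.2 * (r : ZMod n₂) - (x.1.val : ZMod n₂) * (r : ZMod n₂) ^ 2 + 1)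

/-- `σ_{(a,i)}` as a permutation: it is translation by a constant. -/
def CsigmaPerm {n₁ n₂ : ℕ} (hd : n₁ ∣ n₂) (r : ℕ) (x : ZMod n₁ × ZMod n₂) :
    Equiv.Perm (ZMod n₁ × ZMod n₂) :=
  Equiv.addLeft (ZMod.castHom hd (ZMod n₁) x.2 - x.1 * (r : ZMod n₁),
    x.2 * (r : ZMod n₂) - (x.1.val : ZMod n₂) * (r : ZMod n₂) ^ 2 + 1)

theorem coe_CsigmaPerm {n₁ n₂ : ℕ} (hd : n₁ ∣ n₂) (r : ℕ) (x : ZMod n₁ × ZMod n₂) :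
    ⇑(CsigmaPerm hd r x) = Csigma hd r x := by
  funext y
  ext <;> simp only [CsigmaPerm, Csigma, Equiv.coe_addLeft, Prod.fst_add, Prod.snd_add] <;> ring

theorem CsigmaPerm_zpow_apply {n₁ n₂ : ℕ} (hd : n₁ ∣ n₂) (r : ℕ) (k : ℤ)
    (a b : ZMod n₁) (i j : ZMod n₂) :
    (CsigmaPerm hd r (a, i) ^ k) (b, j) =
      (b + (k : ZMod n₁) * (ZMod.castHom hd (ZMod n₁) i - a * (r : ZMod n₁)),
       j + (k : ZMod n₂) * (i * (r : ZMod n₂) - (a.val : ZMod n₂) * (r : ZMod n₂) ^ 2 + 1)) := by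
  simp only [CsigmaPerm, Equiv.zsmul_addLeft, Equiv.coe_addLeft, Prod.smul_mk, Prod.mk_add_mk,
    zsmul_eq_mul, add_comm _ b, add_comm _ j]

theorem Csigma_zpow_apply_general (n₁ n₂ r : ℕ) (hd : n₁ ∣ n₂) :
    (∀ x, ⇑(CsigmaPerm hd r x) = Csigma hd r x) ∧
    (∀ (k : ℤ) (a b : ZMod n₁) (i j : ZMod n₂),
      ((CsigmaPerm hd r (a, i)) ^ k) (b, j) =
        (b + (k : ZMod n₁) * (ZMod.castHom hd (ZMod n₁) i - a * (r : ZMod n₁)),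
         j + (k : ZMod n₂) * ((r : ZMod n₂) * (i - (a.val : ZMod n₂) * (r : ZMod n₂)) + 1))) := by
  refine ⟨coe_CsigmaPerm hd r, fun k a b i j => ?_⟩
  rw [CsigmaPerm_zpow_apply]
  congr 2
  ring

/-- `σ_{(a,i)}^k((b,j)) = (b + kδ, j + k(rδ + 1))` where `δ = i - ar`. -/
theorem Csigma_zpow_apply (n₁ n₂ r : ℕ) (h1 : 0 < n₁) (h2 : 0 < n₂) (hd : n₁ ∣ n₂)
    (hr : r < n₂ / n₁) (hr2 : n₂ ∣ n₁ * r ^ 2) :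
    (∀ x, ⇑(CsigmaPerm hd r x) = Csigma hd r x) ∧
    (∀ (k : ℤ) (a b : ZMod n₁) (i j : ZMod n₂),
      ((CsigmaPerm hd r (a, i)) ^ k) (b, j) =
        (b + (k : ZMod n₁) * (ZMod.castHom hd (ZMod n₁) i - a * (r : ZMod n₁)),
         j + (k : ZMod n₂) * ((r : ZMod n₂) * (i - (a.val : ZMod n₂) * (r : ZMod n₂)) + 1))) :=
  Csigma_zpow_apply_general n₁ n₂ r hd
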